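/- arXiv:math/0208105 — 4 statements merged into one kernel-verified Lean document; each statement's English description precedes it below -/
import Mathlib

section
/- Let G be a compact Lie group acting linearly by orthogonal transformations on Euclidean spaces V₁ and V₂, and consider the direct sum action on V = V₁ ⊕ V₂. If p₁ ∈ V₁ is a regular point for the action (G, V₁), and p₂ ∈ V₂ is a regular point for the restricted action (G_{p₁}, V₂), then p = (p₁, p₂) is a regular point for the action (G, V). -/
/-!
Conjugating first by `g₂ ∈ G_{p₁}` (regularity of `p₂`, applied to `g₁ q₂`) and then by `g₁`
(regularity of `p₁`) moves `G_{p₁} ∩ G_{p₂}` into `G_{q₁} ∩ G_{q₂}`, because `g⁻¹ h g` fixes `q`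
exactly when `h` fixes `g q`.
-/

theorem LinearIsometryEquiv.conj_apply_eq_self_iff {G R E : Type*} [Group G] [Semiring R]
    [SeminormedAddCommGroup E] [Module R E] (ρ : G →* (E ≃ₗᵢ[R] E)) (g h : G) (q : E) :
    ρ (g⁻¹ * h * g) q = q ↔ ρ h (ρ g q) = ρ g q := by
  simp only [map_mul, map_inv, coe_mul, coe_inv, Function.comp_apply, symm_apply_eq]

theorem regular_of_direct_sum_general
    {G : Type*} [Group G]
    {V₁ V₂ : Type*}
    [NormedAddCommGroup V₁] [InnerProductSpace ℝ V₁]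
    [NormedAddCommGroup V₂] [InnerProductSpace ℝ V₂]
    (ρ₁ : G →* (V₁ ≃ₗᵢ[ℝ] V₁)) (ρ₂ : G →* (V₂ ≃ₗᵢ[ℝ] V₂))
    (p₁ : V₁) (p₂ : V₂)
    (hreg₁ : ∀ q₁ : V₁, ∃ g : G, ∀ h : G, ρ₁ h p₁ = p₁ → ρ₁ (g⁻¹ * h * g) q₁ = q₁)
    (hreg₂ : ∀ q₂ : V₂, ∃ g : G, ρ₁ g p₁ = p₁ ∧ ∀ h : G,
        ρ₁ h p₁ = p₁ → ρ₂ h p₂ = p₂ →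
          ρ₁ (g⁻¹ * h * g) p₁ = p₁ ∧ ρ₂ (g⁻¹ * h * g) q₂ = q₂) :
    ∀ (q₁ : V₁) (q₂ : V₂), ∃ g : G, ∀ h : G,
      ρ₁ h p₁ = p₁ → ρ₂ h p₂ = p₂ →
        ρ₁ (g⁻¹ * h * g) q₁ = q₁ ∧ ρ₂ (g⁻¹ * h * g) q₂ = q₂ := by
  intro q₁ q₂
  obtain ⟨g₁, hg₁⟩ := hreg₁ q₁
  obtain ⟨g₂, -, hg₂⟩ := hreg₂ (ρ₂ g₁ q₂)
  refine ⟨g₂ * g₁, fun h hp₁ hp₂ => ?_⟩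
  obtain ⟨hk₁, hk₂⟩ := hg₂ h hp₁ hp₂
  have conj_mul : (g₂ * g₁)⁻¹ * h * (g₂ * g₁) = g₁⁻¹ * (g₂⁻¹ * h * g₂) * g₁ := by group
  rw [conj_mul]
  exact ⟨hg₁ _ hk₁, (LinearIsometryEquiv.conj_apply_eq_self_iff ρ₂ _ _ q₂).mpr hk₂⟩

/-- Let a compact Lie group `G` act orthogonally on Euclidean
spaces `V₁` and `V₂` (via `ρ₁`, `ρ₂`) and consider the direct sum action on
`V = V₁ ⊕ V₂`.  A point `x` is regular for an action when its isotropy group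
is minimal up to conjugacy.  If `p₁ ∈ V₁` is regular for `(G, V₁)` (hypothesis
`hreg₁`) and `p₂ ∈ V₂` is regular for the restricted action `(G_{p₁}, V₂)`
(hypothesis `hreg₂`: the conjugating element can be chosen in `G_{p₁}`), then
`p = (p₁, p₂)` is a regular point for the direct sum action `(G, V₁ ⊕ V₂)`,
whose isotropy groups are `G_{(q₁,q₂)} = G_{q₁} ∩ G_{q₂}`. -/
theorem regular_of_direct_sum
    {G : Type*} [Group G] [TopologicalSpace G] [IsTopologicalGroup G] [CompactSpace G]
    {V₁ V₂ : Type*}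
    [NormedAddCommGroup V₁] [InnerProductSpace ℝ V₁] [FiniteDimensional ℝ V₁]
    [NormedAddCommGroup V₂] [InnerProductSpace ℝ V₂] [FiniteDimensional ℝ V₂]
    (ρ₁ : G →* (V₁ ≃ₗᵢ[ℝ] V₁)) (ρ₂ : G →* (V₂ ≃ₗᵢ[ℝ] V₂))
    (p₁ : V₁) (p₂ : V₂)
    (hreg₁ : ∀ q₁ : V₁, ∃ g : G, ∀ h : G, ρ₁ h p₁ = p₁ → ρ₁ (g⁻¹ * h * g) q₁ = q₁)
    (hreg₂ : ∀ q₂ : V₂, ∃ g : G, ρ₁ g p₁ = p₁ ∧ ∀ h : G,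
        ρ₁ h p₁ = p₁ → ρ₂ h p₂ = p₂ →
          ρ₁ (g⁻¹ * h * g) p₁ = p₁ ∧ ρ₂ (g⁻¹ * h * g) q₂ = q₂) :
    ∀ (q₁ : V₁) (q₂ : V₂), ∃ g : G, ∀ h : G,
      ρ₁ h p₁ = p₁ → ρ₂ h p₂ = p₂ →
        ρ₁ (g⁻¹ * h * g) q₁ = q₁ ∧ ρ₂ (g⁻¹ * h * g) q₂ = q₂ :=
  regular_of_direct_sum_general ρ₁ ρ₂ p₁ p₂ hreg₁ hreg₂
end

section
/- Let G be a compact Lie group acting isometrically on a complete Riemannian manifold M, and let Σ be a totally geodesic, connected, complete submanifold of M that is flat in the induced metric. Let N = Gp be an orbit with p ∈ Σ, v ∈ ν_p(N) ∩ T_pΣ, and γ_v the geodesic with initial velocity v (which stays in Σ). If J is an N-Jacobi field along γ_v with J(t₀) = 0 for some t₀ > 0, and the tangential part of J to Σ vanishes at t = 0, then J(t) is orthogonal to T_{γ_v(t)}Σ for all t. -/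
/-!
In a parallel orthonormal frame along `γ_v` covariant derivatives are ordinary derivatives, so the
component `Q J` of the Jacobi field tangent to the flat totally geodesic `Σ` (with `Q` the orthogonal
projection onto `T`) satisfies `(Q J)'' = -Q (R J)`. Since `R` kills `T` and preserves `Tᗮ`, it takes
values in `Tᗮ`, so `(Q J)'' = 0`: the tangential part is affine in `t`. It vanishes at `0` and at
`t₀ ≠ 0`, hence identically.
-/

theorem Submodule.range_le_orthogonal_of_le_ker {𝕜 E : Type*} [RCLike 𝕜] [NormedAddCommGroup E]
    [InnerProductSpace 𝕜 E] {K : Submodule 𝕜 E} [K.HasOrthogonalProjection] {L : E →ₗ[𝕜] E}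
    (hK : K ≤ LinearMap.ker L) (hKperp : Kᗮ ≤ Kᗮ.comap L) :
    LinearMap.range L ≤ Kᗮ := by
  rintro _ ⟨w, rfl⟩
  have hsplit : L w = L (K.starProjection w) + L (w - K.starProjection w) := by
    rw [← map_add, add_sub_cancel]
  rw [hsplit, hK (K.starProjection_apply_mem w), zero_add]
  exact hKperp (K.sub_starProjection_mem_orthogonal w)

theorem eq_add_smul_of_hasDerivAt_of_hasDerivAt_zero {E : Type*} [NormedAddCommGroup E]
    [NormedSpace ℝ E] {f f' : ℝ → E} (hf : ∀ t, HasDerivAt f (f' t) t)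
    (hf' : ∀ t, HasDerivAt f' 0 t) (t : ℝ) :
    f t = f 0 + t • f' 0 := by
  have hf'_const : ∀ s, f' s = f' 0 := fun s =>
    is_const_of_deriv_eq_zero (fun s => (hf' s).differentiableAt) (fun s => (hf' s).deriv) s 0
  have hg : ∀ s, HasDerivAt (fun u => f u - u • f' 0) 0 s := fun s => by
    have := (hf s).sub ((hasDerivAt_id s).smul_const (f' 0))
    rwa [hf'_const s, one_smul, sub_self] at this
  have := is_const_of_deriv_eq_zero (fun s => (hg s).differentiableAt) (fun s => (hg s).deriv) t 0
  simpa [sub_eq_iff_eq_add, add_comm] using this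

theorem eq_zero_of_hasDerivAt_of_hasDerivAt_zero {E : Type*} [NormedAddCommGroup E]
    [NormedSpace ℝ E] {f f' : ℝ → E} (hf : ∀ t, HasDerivAt f (f' t) t)
    (hf' : ∀ t, HasDerivAt f' 0 t) {t₀ : ℝ} (ht₀ : t₀ ≠ 0) (h0 : f 0 = 0) (hz : f t₀ = 0)
    (t : ℝ) : f t = 0 := by
  have hslope : f' 0 = 0 := by
    have := eq_add_smul_of_hasDerivAt_of_hasDerivAt_zero hf hf' t₀
    rw [hz, h0, zero_add, eq_comm, smul_eq_zero] at this
    exact this.resolve_left ht₀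
  rw [eq_add_smul_of_hasDerivAt_of_hasDerivAt_zero hf hf' t, h0, hslope, smul_zero, add_zero]

theorem jacobi_orthogonal_to_flat_section_general
    {V : Type*} [NormedAddCommGroup V] [InnerProductSpace ℝ V] [FiniteDimensional ℝ V]
    (T : Submodule ℝ V)
    (R : ℝ → V →ₗ[ℝ] V)
    (hRT : ∀ t : ℝ, ∀ w ∈ T, R t w = 0)
    (hRTperp : ∀ t : ℝ, ∀ w ∈ Tᗮ, R t w ∈ Tᗮ)
    (J : ℝ → V) (hsm : ContDiff ℝ 2 J)
    (hJacobi : ∀ t : ℝ, deriv (deriv J) t + R t (J t) = 0)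
    (t₀ : ℝ) (ht₀ : 0 < t₀) (hz : J t₀ = 0)
    (h0 : J 0 ∈ Tᗮ) :
    ∀ t : ℝ, J t ∈ Tᗮ := by
  set Q := T.starProjection
  have hJ : Differentiable ℝ J := hsm.differentiable (by norm_num)
  have hJ' : Differentiable ℝ (deriv J) :=
    (contDiff_succ_iff_deriv.mp (show ContDiff ℝ (1 + 1) J from hsm)).2.2.differentiable
      one_ne_zero
  have hQR : ∀ t, Q (R t (J t)) = 0 := fun t =>
    T.starProjection_apply_eq_zero_iff.mpr <|
      Submodule.range_le_orthogonal_of_le_ker (hRT t) (hRTperp t) ⟨J t, rfl⟩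
  have hQJ' : ∀ t, HasDerivAt (fun s => Q (J s)) (Q (deriv J t)) t := fun t =>
    Q.hasFDerivAt.comp_hasDerivAt t (hJ t).hasDerivAt
  have hQJ'' : ∀ t, HasDerivAt (fun s => Q (deriv J s)) 0 t := fun t => by
    have := Q.hasFDerivAt.comp_hasDerivAt t (hJ' t).hasDerivAt
    rwa [eq_neg_of_add_eq_zero_left (hJacobi t), map_neg, hQR, neg_zero] at this
  intro t
  exact T.starProjection_apply_eq_zero_iff.mp <|
    eq_zero_of_hasDerivAt_of_hasDerivAt_zero hQJ' hQJ'' ht₀.ne'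
      (T.starProjection_apply_eq_zero_iff.mpr h0) (by simp [hz]) t

/-- Let `G` be a compact Lie group acting isometrically on a
complete Riemannian manifold `M` and `Σ` a totally geodesic, connected,
complete submanifold that is flat in the induced metric.  Let `N = Gp` be an
orbit with `p ∈ Σ` and `v ∈ ν_p(N) ∩ T_pΣ`, and `γ_v` the normal geodesic
(which stays in `Σ`).  Working in a parallel orthonormal frame along `γ_v`, all
tangent spaces are identified with a fixed Euclidean space `V`; `T` is the
(parallel) tangent space of `Σ`, `TN` the tangent space of the orbit, and
`R t` the Jacobi (curvature) operator along `γ_v`.  Since `Σ` is totally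
geodesic, `R` preserves the splitting `T ⊕ Tᗮ` (`hRTperp`), and since `Σ` is
flat, `R` vanishes on `T` (`hRT`).  If `J` is an `N`-Jacobi field along `γ_v`
(`hJacobi`, `hNJ0`, `hNJ`) with `J(t₀) = 0` for some `t₀ > 0` and the part of
`J` tangential to `Σ` vanishes at `t = 0` (`h0`), then `J(t)` is orthogonal to
`T_{γ_v(t)}Σ` for all `t`. -/
theorem jacobi_orthogonal_to_flat_section
    {V : Type*} [NormedAddCommGroup V] [InnerProductSpace ℝ V] [FiniteDimensional ℝ V]
    (T TN : Submodule ℝ V)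
    (v : V) (hvN : v ∈ TNᗮ) (hvT : v ∈ T)
    (R : ℝ → V →ₗ[ℝ] V)
    (hRT : ∀ t : ℝ, ∀ w ∈ T, R t w = 0)
    (hRTperp : ∀ t : ℝ, ∀ w ∈ Tᗮ, R t w ∈ Tᗮ)
    (A : V →ₗ[ℝ] V)
    (J : ℝ → V) (hsm : ContDiff ℝ 2 J)
    (hJacobi : ∀ t : ℝ, deriv (deriv J) t + R t (J t) = 0)
    (hNJ0 : J 0 ∈ TN) (hNJ : deriv J 0 + A (J 0) ∈ TNᗮ)
    (t₀ : ℝ) (ht₀ : 0 < t₀) (hz : J t₀ = 0)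
    (h0 : J 0 ∈ Tᗮ) :
    ∀ t : ℝ, J t ∈ Tᗮ :=
  jacobi_orthogonal_to_flat_section_general T R hRT hRTperp J hsm hJacobi t₀ ht₀ hz h0
end

section
/- Let G be a compact Lie group acting by orthogonal transformations on a Euclidean space V, let N = Gp be a principal orbit with second fundamental form α, and let U_p ⊆ T_pN be a subspace invariant under all shape operators A_v, v ∈ ν_p(N). Suppose U_p has the property that for every v ∈ ν_p(N) and every eigenvector u of A_v with nonzero eigenvalue λ that is orthogonal to U_p, one has u ∈ T_p(G_q p) with q = p + (1/λ)v. Then every subspace D_p of T_pN with this same property that is additionally invariant under all shape operators contains the canonical subspace U_p⁰, defined as the span, over all v ∈ ν_pN and nonzero eigenvalues λ of A_v, of the orthogonal complement of T_p(G_q p) in the λ-eigenspace of A_v (q = p + (1/λ)v). -/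
open scoped RealInnerProductSpace

/-!
Decompose a generator `u` of `U_p⁰`, an eigenvector of `A_v` orthogonal to `T_p(G_q p)`,
as `u₁ + u₂` with `u₁ ∈ D_p` and `u₂ ⊥ D_p`. Since `A_v` is symmetric and `D_p` is
`A_v`-invariant, so is `D_pᗮ`, and the two components are again eigenvectors for the same
eigenvalue. Property (P_Euc) of `D_p` puts `u₂` into `T_p(G_q p)`,
hence `‖u₂‖² = ⟪u, u₂⟫ = 0` and `u = u₁ ∈ D_p`.
-/

namespace Module.End

variable {R M : Type*} [CommRing R] [AddCommGroup M] [Module R M]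

theorem apply_eq_smul_of_add_of_disjoint {T : Module.End R M} {p q : Submodule R M}
    (hp : p ∈ T.invtSubmodule) (hq : q ∈ T.invtSubmodule) (hpq : Disjoint p q) {l : R}
    {x y : M} (hx : x ∈ p) (hy : y ∈ q) (h : T (x + y) = l • (x + y)) : T y = l • y := by
  have hdiff : T y - l • y = l • x - T x := by
    rw [map_add, smul_add] at h
    rw [sub_eq_sub_iff_add_eq_add, add_comm (T y), h, add_comm]
  have hmem_p : T y - l • y ∈ p := hdiff ▸ p.sub_mem (p.smul_mem l hx) (hp hx)
  have hmem_q : T y - l • y ∈ q := q.sub_mem (hq hy) (q.smul_mem l hy)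
  exact sub_eq_zero.mp ((Submodule.disjoint_def.mp hpq) _ hmem_p hmem_q)

end Module.End

namespace LinearMap.IsSymmetric

variable {𝕜 E : Type*} [RCLike 𝕜] [NormedAddCommGroup E] [InnerProductSpace 𝕜 E]

open scoped InnerProductSpace in
theorem eigenspace_inf_orthogonal_le {T : Module.End 𝕜 E} (hT : T.IsSymmetric)
    {D : Submodule 𝕜 E} [D.HasOrthogonalProjection] (hD : D ∈ T.invtSubmodule)
    {S : Submodule 𝕜 E} {l : 𝕜} (hDS : Module.End.eigenspace T l ⊓ Dᗮ ≤ S) :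
    Module.End.eigenspace T l ⊓ Sᗮ ≤ D := by
  rintro u ⟨hu, huS⟩
  set u₁ : E := D.starProjection u
  set u₂ : E := u - u₁
  have hu₁ : u₁ ∈ D := D.starProjection_apply_mem u
  have hu₂ : u₂ ∈ Dᗮ := D.sub_starProjection_mem_orthogonal u
  have hsum : u₁ + u₂ = u := add_sub_cancel u₁ u
  have heig₂ : T u₂ = l • u₂ :=
    Module.End.apply_eq_smul_of_add_of_disjoint hD (hT.orthogonalComplement_mem_invtSubmodule hD)
      D.orthogonal_disjoint hu₁ hu₂ (hsum ▸ Module.End.mem_eigenspace_iff.mp hu)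
  have hu₂S : u₂ ∈ S := hDS ⟨Module.End.mem_eigenspace_iff.mpr heig₂, hu₂⟩
  have hnorm : ⟪u₂, u₂⟫_𝕜 = 0 := by
    calc ⟪u₂, u₂⟫_𝕜 = ⟪u₁ + u₂, u₂⟫_𝕜 := by
          rw [inner_add_left, Submodule.inner_right_of_mem_orthogonal hu₁ hu₂, zero_add]
      _ = 0 := hsum ▸ Submodule.inner_left_of_mem_orthogonal hu₂S huS
  rw [← hsum, inner_self_eq_zero.mp hnorm, add_zero]
  exact hu₁

end LinearMap.IsSymmetric

theorem canonical_subspace_minimal_general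
    {V : Type*} [NormedAddCommGroup V] [InnerProductSpace ℝ V] [FiniteDimensional ℝ V]
    (p : V) (TpN : Submodule ℝ V)
    (A : V → (V →ₗ[ℝ] V))
    (hAsymm : ∀ v ∈ TpNᗮ, ∀ x y : V, ⟪A v x, y⟫ = ⟪x, A v y⟫)
    (Torb : V → Submodule ℝ V)
    (U0 : Submodule ℝ V)
    (hU0 : U0 = Submodule.span ℝ {u : V | ∃ v ∈ TpNᗮ, ∃ l : ℝ,
      l ≠ 0 ∧ A v u = l • u ∧ ∀ w ∈ Torb (p + l⁻¹ • v), ⟪u, w⟫ = 0})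
    (D : Submodule ℝ V)
    (hDinv : ∀ v ∈ TpNᗮ, ∀ d ∈ D, A v d ∈ D)
    (hDP : ∀ v ∈ TpNᗮ, ∀ (u : V) (l : ℝ), l ≠ 0 → A v u = l • u →
      (∀ w ∈ D, ⟪u, w⟫ = 0) → u ∈ Torb (p + l⁻¹ • v)) :
    U0 ≤ D := by
  rw [hU0, Submodule.span_le]
  rintro u ⟨v, hv, l, hl, heig, horth⟩
  have hDS : Module.End.eigenspace (A v) l ⊓ Dᗮ ≤ Torb (p + l⁻¹ • v) := by
    rintro w ⟨hw, hwD⟩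
    exact hDP v hv w l hl (Module.End.mem_eigenspace_iff.mp hw)
      ((Submodule.mem_orthogonal' D w).mp hwD)
  exact LinearMap.IsSymmetric.eigenspace_inf_orthogonal_le (hAsymm v hv) (hDinv v hv) hDS
    ⟨Module.End.mem_eigenspace_iff.mpr heig, (Submodule.mem_orthogonal' _ u).mpr horth⟩

/-- Let `G` act orthogonally on a Euclidean space `V`, let
`N = Gp` be a principal orbit with tangent space `TpN` and shape operators
`A v` (symmetric, for `v ∈ ν_p(N) = TpNᗮ`), and let `Torb q` denote the
tangent space `T_p(G_q p)` of the orbit of `p` under the isotropy group of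
`q`.  Property (P_Euc) of a subspace `W` says: for every `v ∈ ν_p(N)` and
every eigenvector `u` of `A v` with nonzero eigenvalue `l` orthogonal to `W`,
one has `u ∈ Torb (p + (1/l) v)`.  Suppose `U ⊆ TpN` is a subspace with
property (P_Euc) which is invariant under all shape operators.  Then every
subspace `D` with property (P_Euc) that is invariant under all shape operators
contains the canonical subspace `U0`, the span over all `v` and nonzero
eigenvalues `l` of the orthogonal complement of `Torb (p + (1/l) v)` inside
the `l`-eigenspace of `A v`. -/
theorem canonical_subspace_minimal
    {V : Type*} [NormedAddCommGroup V] [InnerProductSpace ℝ V] [FiniteDimensional ℝ V]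
    (p : V) (TpN : Submodule ℝ V)
    (A : V → (V →ₗ[ℝ] V))
    (hAsymm : ∀ v ∈ TpNᗮ, ∀ x y : V, ⟪A v x, y⟫ = ⟪x, A v y⟫)
    (hAtan : ∀ v ∈ TpNᗮ, ∀ w ∈ TpN, A v w ∈ TpN)
    (Torb : V → Submodule ℝ V)
    (U : Submodule ℝ V) (hU : U ≤ TpN)
    (hUinv : ∀ v ∈ TpNᗮ, ∀ u ∈ U, A v u ∈ U)
    (hUP : ∀ v ∈ TpNᗮ, ∀ (u : V) (l : ℝ), l ≠ 0 → A v u = l • u →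
      (∀ w ∈ U, ⟪u, w⟫ = 0) → u ∈ Torb (p + l⁻¹ • v))
    (U0 : Submodule ℝ V)
    (hU0 : U0 = Submodule.span ℝ {u : V | ∃ v ∈ TpNᗮ, ∃ l : ℝ,
      l ≠ 0 ∧ A v u = l • u ∧ ∀ w ∈ Torb (p + l⁻¹ • v), ⟪u, w⟫ = 0})
    (D : Submodule ℝ V)
    (hDinv : ∀ v ∈ TpNᗮ, ∀ d ∈ D, A v d ∈ D)
    (hDP : ∀ v ∈ TpNᗮ, ∀ (u : V) (l : ℝ), l ≠ 0 → A v u = l • u →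
      (∀ w ∈ D, ⟪u, w⟫ = 0) → u ∈ Torb (p + l⁻¹ • v)) :
    U0 ≤ D :=
  canonical_subspace_minimal_general p TpN A hAsymm Torb U0 hU0 D hDinv hDP
end

section
/- Let G be a compact Lie group acting by orthogonal transformations on a Euclidean space V, and let Σ be a k-section such that for every q ∈ Σ, the isotropy group G_q is transitive on the G-translates of Σ through q, and such that at each G-regular point the translates through regular points are unique. Then for every q ∈ Σ, the orbit of q under the stabilizer G_Σ = {g ∈ G : gΣ = Σ} equals Gq ∩ Σ. -/
/-- A point `x` is a regular point of the orthogonal action `ρ` of `G` on `V`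
if its isotropy group is minimal up to conjugacy. -/
def IsRegPt {G V : Type*} [Group G] [NormedAddCommGroup V] [InnerProductSpace ℝ V]
    (ρ : G →* (V ≃ₗᵢ[ℝ] V)) (x : V) : Prop :=
  ∀ q : V, ∃ g : G, ∀ h : G, ρ h x = x → ρ (g⁻¹ * h * g) q = q

/-!
An element `g` carrying `q ∈ Σ` to `x = g q ∈ Σ` need not preserve `Σ`, but `x` lies on both
`Σ` and `gΣ`, so transitivity of `G_x` on the translates of `Σ` through `x` yields `h ∈ G_x`
with `h g Σ = Σ`. Then `h g` stabilizes `Σ` and still carries `q` to `x`.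
-/

open scoped Pointwise

namespace MulAction

variable {G α : Type*} [Group G] [MulAction G α] {S : Set α} {q : α}

theorem orbit_stabilizer_subset_orbit_inter (hq : q ∈ S) :
    orbit (stabilizer G S) q ⊆ orbit G q ∩ S := by
  rintro _ ⟨⟨g, hg⟩, rfl⟩
  exact ⟨mem_orbit q g, (mem_stabilizer_set.mp hg q).mpr hq⟩

theorem orbit_inter_subset_orbit_stabilizer
    (htrans : ∀ p ∈ S, ∀ g : G, p ∈ g • S → ∃ h ∈ stabilizer G p, h • g • S = S)
    (hq : q ∈ S) :
    orbit G q ∩ S ⊆ orbit (stabilizer G S) q := by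
  rintro _ ⟨⟨g, rfl⟩, hx⟩
  obtain ⟨h, hh, hS⟩ := htrans _ hx g (Set.smul_mem_smul_set hq)
  have hhg : h * g ∈ stabilizer G S := by rw [mem_stabilizer_iff, mul_smul, hS]
  exact ⟨⟨h * g, hhg⟩, by
    show (h * g) • q = g • q
    rw [mul_smul, mem_stabilizer_iff.mp hh]⟩

theorem orbit_stabilizer_eq_orbit_inter
    (htrans : ∀ p ∈ S, ∀ g : G, p ∈ g • S → ∃ h ∈ stabilizer G p, h • g • S = S)
    (hq : q ∈ S) :
    orbit (stabilizer G S) q = orbit G q ∩ S :=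
  (orbit_stabilizer_subset_orbit_inter hq).antisymm (orbit_inter_subset_orbit_stabilizer htrans hq)

end MulAction

instance LinearIsometryEquiv.applyMulAction {R E : Type*} [Semiring R] [SeminormedAddCommGroup E]
    [Module R E] : MulAction (E ≃ₗᵢ[R] E) E where
  smul f x := f x
  one_smul _ := rfl
  mul_smul _ _ _ := rfl

theorem stabilizer_orbit_eq_orbit_inter_section_general
    {G V : Type*} [Group G]
    [NormedAddCommGroup V] [InnerProductSpace ℝ V]
    (ρ : G →* (V ≃ₗᵢ[ℝ] V))
    (Sig : Submodule ℝ V)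
    (htrans : ∀ q' ∈ Sig, ∀ g₁ g₂ : G, q' ∈ (fun x => ρ g₁ x) '' (Sig : Set V) →
      q' ∈ (fun x => ρ g₂ x) '' (Sig : Set V) →
      ∃ h : G, ρ h q' = q' ∧
        (fun x => ρ h x) '' ((fun x => ρ g₁ x) '' (Sig : Set V))
          = (fun x => ρ g₂ x) '' (Sig : Set V)) :
    ∀ q ∈ Sig,
      {x : V | ∃ g : G, (∀ s : V, s ∈ Sig ↔ ρ g s ∈ Sig) ∧ ρ g q = x}
        = {x : V | (∃ g : G, ρ g q = x) ∧ x ∈ Sig} := by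
  intro q hq
  let _ := MulAction.compHom V ρ
  have key := MulAction.orbit_stabilizer_eq_orbit_inter (S := (Sig : Set V)) (fun p hp g hpg => by
    obtain ⟨h, hh, hS⟩ := htrans p hp g 1 hpg ⟨p, hp, by simp⟩
    exact ⟨h, hh, hS.trans (one_smul G _)⟩) hq
  ext x
  have hx := Set.ext_iff.mp key x
  simp only [MulAction.mem_orbit_iff, MulAction.mem_stabilizer_set, Set.mem_inter_iff,
    Subtype.exists, Subgroup.mk_smul, exists_prop, SetLike.mem_coe] at hx
  simp only [Set.mem_ofPred_eq, iff_comm] at hx ⊢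
  exact hx

/-- Let a compact Lie group `G` act orthogonally on a
Euclidean space `V` (via `ρ`, with Lie algebra of Killing generators `𝔤`), and
let `Sig` be a linear `k`-section: it meets every orbit (`hmeets`), contains
the normal spaces at its regular points (`hC3`), satisfies condition (C4)
(`hC4`: for regular `x ∈ Sig` with `ρ g x ∈ Sig` one has `g Sig = Sig`, which
is the uniqueness of translates through regular points), and for every
`q' ∈ Sig` the isotropy group `G_{q'}` is transitive on the `G`-translates of
`Sig` through `q'` (`htrans`).  Then for every `q ∈ Sig`, the orbit of `q`
under the stabilizer `G_Sig = {g : G | g Sig = Sig}` equals `Gq ∩ Sig`. -/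
theorem stabilizer_orbit_eq_orbit_inter_section
    {G V : Type*} [Group G] [TopologicalSpace G] [IsTopologicalGroup G] [CompactSpace G]
    [NormedAddCommGroup V] [InnerProductSpace ℝ V] [FiniteDimensional ℝ V]
    (ρ : G →* (V ≃ₗᵢ[ℝ] V))
    (𝔤 : Set (V →ₗ[ℝ] V))
    (Sig : Submodule ℝ V)
    (hmeets : ∀ x : V, ∃ g : G, ρ g x ∈ Sig)
    (hC3 : ∀ x ∈ Sig, IsRegPt ρ x →
      (Submodule.span ℝ {w : V | ∃ X ∈ 𝔤, w = X x})ᗮ ≤ Sig)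
    (hC4 : ∀ x ∈ Sig, IsRegPt ρ x → ∀ g : G, ρ g x ∈ Sig →
      ∀ s : V, s ∈ Sig ↔ ρ g s ∈ Sig)
    (htrans : ∀ q' ∈ Sig, ∀ g₁ g₂ : G, q' ∈ (fun x => ρ g₁ x) '' (Sig : Set V) →
      q' ∈ (fun x => ρ g₂ x) '' (Sig : Set V) →
      ∃ h : G, ρ h q' = q' ∧
        (fun x => ρ h x) '' ((fun x => ρ g₁ x) '' (Sig : Set V))
          = (fun x => ρ g₂ x) '' (Sig : Set V)) :
    ∀ q ∈ Sig,
      {x : V | ∃ g : G, (∀ s : V, s ∈ Sig ↔ ρ g s ∈ Sig) ∧ ρ g q = x}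
        = {x : V | (∃ g : G, ρ g q = x) ∧ x ∈ Sig} :=
  stabilizer_orbit_eq_orbit_inter_section_general ρ Sig htrans
end
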